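/- arXiv:2207.13839 — 3 statements merged into one kernel-verified Lean document; each statement's English description precedes it below -/
import Mathlib

section
/- Let d ≥ 2, let (i,m) and (i',m') be pairs with 2 ≤ i' < i ≤ d, 1 ≤ m < m', m ≤ ⌊i/2⌋, m' ≤ ⌊i'/2⌋, and suppose m(i-m) = m'(i'-m'). Then for all 1 ≤ k ≤ d-2, f_k(d,i,m) ≤ f_k(d,i',m'), where f_k(d,i,m) = C(d+2, d-k+1) - C(d-i+m+1, d-k+1) - C(d-m+1, d-k+1) + C(d-i+1, d-k+1). -/
/-- `f_k(d,i,m)`: the number of `k`-faces of Grünbaum's polytope `T^{d,d-i}_m`. -/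
def grunbaumF (d i m k : ℕ) : ℤ :=
  ((d + 2).choose (d - k + 1) : ℤ) - ((d - i + m + 1).choose (d - k + 1) : ℤ)
    - ((d - m + 1).choose (d - k + 1) : ℤ) + ((d - i + 1).choose (d - k + 1) : ℤ)

private def ggF (d n x : ℕ) : ℤ := ((d + 1 - x).choose n : ℤ)
private def hhF (d n x : ℕ) : ℤ := ((d - x).choose (n - 1) : ℤ)
private def wwF (d n x : ℕ) : ℤ := ((d - 1 - x).choose (n - 2) : ℤ)

private lemma teleF (G H : ℕ → ℤ) (a b : ℕ) (hab : a ≤ b)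
    (hstep : ∀ x, a ≤ x → x < b → G x - G (x + 1) = H x) :
    G a - G b = ∑ x ∈ Finset.Ico a b, H x := by
  induction b with
  | zero =>
    have : a = 0 := by omega
    subst this; simp
  | succ b ih =>
    rcases le_or_gt a b with h | h
    · rw [Finset.sum_Ico_succ_top h, ← ih h (fun x hx hxb => hstep x hx (by omega))]
      have := hstep b h (by omega)
      linarith
    · have : a = b + 1 := by omega
      subst this; simp

private lemma ggF_step (d n x : ℕ) (hx : x ≤ d) (hn : 1 ≤ n) :
    ggF d n x - ggF d n (x + 1) = hhF d n x := by
  obtain ⟨s, rfl⟩ : ∃ s, n = s + 1 := ⟨n - 1, by omega⟩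
  have h1 : d + 1 - x = (d - x) + 1 := by omega
  have h2 : d + 1 - (x + 1) = d - x := by omega
  simp only [ggF, hhF, h1, h2, Nat.choose_succ_succ, Nat.add_sub_cancel]
  push_cast; ring

private lemma hhF_step (d n x : ℕ) (hx : x < d) (hn : 2 ≤ n) :
    hhF d n x - hhF d n (x + 1) = wwF d n x := by
  obtain ⟨s, rfl⟩ : ∃ s, n = s + 2 := ⟨n - 2, by omega⟩
  have h1 : d - x = (d - 1 - x) + 1 := by omega
  have h2 : d - (x + 1) = d - 1 - x := by omega
  have h3 : s + 2 - 1 = s + 1 := by omega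
  have h4 : s + 2 - 2 = s := by omega
  simp only [hhF, wwF, h1, h2, h3, h4, Nat.choose_succ_succ]
  push_cast; ring

private lemma hhF_anti (d n : ℕ) {a b : ℕ} (hab : a ≤ b) : hhF d n b ≤ hhF d n a := by
  simp only [hhF]
  exact_mod_cast Nat.choose_le_choose _ (by omega : d - b ≤ d - a)

private lemma wwF_anti (d n : ℕ) {a b : ℕ} (hab : a ≤ b) : wwF d n b ≤ wwF d n a := by
  simp only [wwF]
  exact_mod_cast Nat.choose_le_choose _ (by omega : d - 1 - b ≤ d - 1 - a)

/-- If `T^{d,d-i}_m` and `T^{d,d-i'}_{m'}` have the same number of facets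
(i.e. `m(i-m) = m'(i'-m')`) with `i' < i` and `m < m'`, then
`f_k(d,i,m) ≤ f_k(d,i',m')` for all `1 ≤ k ≤ d-2`. -/
theorem grunbaumF_ordered (d i i' m m' : ℕ)
    (hi' : 2 ≤ i') (hii : i' < i) (hid : i ≤ d)
    (hm1 : 1 ≤ m) (hmm : m < m') (hm2 : m ≤ i / 2) (hm2' : m' ≤ i' / 2)
    (hfacets : m * (i - m) = m' * (i' - m')) :
    ∀ k : ℕ, 1 ≤ k → k ≤ d - 2 → grunbaumF d i m k ≤ grunbaumF d i' m' k := by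
  intro k hk1 hk2
  have hd3 : 3 ≤ d := by omega
  set n := d - k + 1 with hn
  have hn2 : 2 ≤ n := by omega
  set p := i - m with hp
  set p' := i' - m' with hp'
  have hmp : m + p = i := by omega
  have hm'p' : m' + p' = i' := by omega
  have hm'le : m' ≤ p' := by omega
  have hpp' : p' < p := by omega
  set δ := m' - m with hδdef
  have hδ1 : 1 ≤ δ := by omega
  set q := p' - m with hqdef
  have hq1 : 1 ≤ q := by omega
  have hprod : m * p = m' * p' := hfacets
  have hprodZ : (m : ℤ) * p = (m' : ℤ) * p' := by exact_mod_cast hprod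
  have hδZ : (m' : ℤ) = m + δ := by push_cast [hδdef]; omega
  have hqZ : (p' : ℤ) = m + q := by push_cast [hqdef]; omega
  -- p' + δ < p
  have hstretch : p' + δ < p := by
    have h1 : (m : ℤ) * ((p : ℤ) - p') = (δ : ℤ) * p' := by linear_combination hprodZ + (p' : ℤ) * hδZ
    have hm' : (m : ℤ) + 1 ≤ (p' : ℤ) := by push_cast; omega
    have : (δ : ℤ) + 1 ≤ (p : ℤ) - p' := by nlinarith [hδ1, hm1]
    omega
  set e := p - p' - δ with hedef
  have hpe : p = p' + δ + e := by omega
  have hsum : m + p = m' + p' + e := by omega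
  have hem : (e : ℤ) * m = (δ : ℤ) * q := by
    have hpeZ : (p : ℤ) = p' + δ + e := by exact_mod_cast congrArg (Nat.cast (R := ℤ)) hpe
    linear_combination hprodZ - (m : ℤ) * hpeZ + (p' : ℤ) * hδZ + (δ : ℤ) * hqZ
  -- telescoping sums
  have hm'd : m' ≤ d := by omega
  have T1 : ggF d n m - ggF d n m' = ∑ x ∈ Finset.Ico m m', hhF d n x :=
    teleF _ _ _ _ (le_of_lt hmm) (fun x hx hxb => ggF_step d n x (by omega) (by omega))
  have T2 : ggF d n p' - ggF d n p = ∑ x ∈ Finset.Ico p' p, hhF d n x :=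
    teleF _ _ _ _ (le_of_lt hpp') (fun x hx hxb => ggF_step d n x (by omega) (by omega))
  have T3 : ggF d n (m' + p') - ggF d n (m + p) = ∑ x ∈ Finset.Ico (m' + p') (m + p), hhF d n x :=
    teleF _ _ _ _ (by omega) (fun x hx hxb => ggF_step d n x (by omega) (by omega))
  have hsplit : (∑ x ∈ Finset.Ico p' (p' + δ), hhF d n x) + (∑ x ∈ Finset.Ico (p' + δ) p, hhF d n x)
      = ∑ x ∈ Finset.Ico p' p, hhF d n x :=
    Finset.sum_Ico_consecutive _ (by omega) (by omega)
  -- the pivotal weight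
  set W := wwF d n (p' + δ) with hW
  -- upper bound for the "bad" part
  have hA : (∑ x ∈ Finset.Ico (p' + δ) p, hhF d n x) - (∑ x ∈ Finset.Ico (m' + p') (m + p), hhF d n x)
      ≤ (e : ℤ) * ((m : ℤ) * W) := by
    rw [Finset.sum_Ico_eq_sum_range, Finset.sum_Ico_eq_sum_range]
    have c1 : p - (p' + δ) = e := by omega
    have c2 : m + p - (m' + p') = e := by omega
    rw [c1, c2, ← Finset.sum_sub_distrib]
    have : ∀ j ∈ Finset.range e, hhF d n (p' + δ + j) - hhF d n (m' + p' + j) ≤ (m : ℤ) * W := by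
      intro j hj
      simp only [Finset.mem_range] at hj
      have htel : hhF d n (p' + δ + j) - hhF d n (m' + p' + j)
          = ∑ x ∈ Finset.Ico (p' + δ + j) (m' + p' + j), wwF d n x :=
        teleF _ _ _ _ (by omega) (fun x hx hxb => hhF_step d n x (by omega) hn2)
      rw [htel, Finset.sum_Ico_eq_sum_range]
      have c3 : m' + p' + j - (p' + δ + j) = m := by omega
      rw [c3]
      calc ∑ y ∈ Finset.range m, wwF d n (p' + δ + j + y)
          ≤ ∑ _y ∈ Finset.range m, W :=
            Finset.sum_le_sum (fun y _ => wwF_anti d n (by omega))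
        _ = (m : ℤ) * W := by simp [mul_comm]
    calc ∑ j ∈ Finset.range e, (hhF d n (p' + δ + j) - hhF d n (m' + p' + j))
        ≤ ∑ _j ∈ Finset.range e, (m : ℤ) * W := Finset.sum_le_sum this
      _ = (e : ℤ) * ((m : ℤ) * W) := by simp [mul_comm]
  -- lower bound for the "good" part
  have hB : (δ : ℤ) * ((q : ℤ) * W)
      ≤ (∑ x ∈ Finset.Ico m m', hhF d n x) - (∑ x ∈ Finset.Ico p' (p' + δ), hhF d n x) := by
    rw [Finset.sum_Ico_eq_sum_range, Finset.sum_Ico_eq_sum_range]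
    have c1 : m' - m = δ := by omega
    have c2 : p' + δ - p' = δ := by omega
    rw [c1, c2, ← Finset.sum_sub_distrib]
    have : ∀ j ∈ Finset.range δ, (q : ℤ) * W ≤ hhF d n (m + j) - hhF d n (p' + j) := by
      intro j hj
      simp only [Finset.mem_range] at hj
      have htel : hhF d n (m + j) - hhF d n (p' + j)
          = ∑ x ∈ Finset.Ico (m + j) (p' + j), wwF d n x :=
        teleF _ _ _ _ (by omega) (fun x hx hxb => hhF_step d n x (by omega) hn2)
      rw [htel, Finset.sum_Ico_eq_sum_range]
      have c3 : p' + j - (m + j) = q := by omega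
      rw [c3]
      calc ((q : ℤ)) * W = ∑ _y ∈ Finset.range q, W := by simp [mul_comm]
        _ ≤ ∑ y ∈ Finset.range q, wwF d n (m + j + y) :=
            Finset.sum_le_sum (fun y hy => by
              simp only [Finset.mem_range] at hy
              exact wwF_anti d n (by omega))
    calc (δ : ℤ) * ((q : ℤ) * W) = ∑ _j ∈ Finset.range δ, (q : ℤ) * W := by simp [mul_comm]
      _ ≤ ∑ j ∈ Finset.range δ, (hhF d n (m + j) - hhF d n (p' + j)) := Finset.sum_le_sum this
  -- assemble
  have key : ggF d n m' + ggF d n p' - ggF d n (m' + p')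
      ≤ ggF d n m + ggF d n p - ggF d n (m + p) := by
    have hemW : (e : ℤ) * ((m : ℤ) * W) = (δ : ℤ) * ((q : ℤ) * W) := by
      rw [← mul_assoc, ← mul_assoc, hem]
    linarith [hA, hB, hemW, T1, T2, T3, hsplit]
  -- rewrite the goal
  simp only [grunbaumF]
  have e1 : d - i + m + 1 = d + 1 - p := by omega
  have e2 : d - m + 1 = d + 1 - m := by omega
  have e3 : d - i + 1 = d + 1 - (m + p) := by omega
  have e1' : d - i' + m' + 1 = d + 1 - p' := by omega
  have e2' : d - m' + 1 = d + 1 - m' := by omega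
  have e3' : d - i' + 1 = d + 1 - (m' + p') := by omega
  rw [e1, e2, e3, e1', e2', e3']
  simp only [ggF] at key
  linarith [key]
end

section
/- Let d ≥ s ≥ 2, 2 ≤ m ≤ s, and 1 ≤ k. Then φ_k(d+s-m, d-1) + Σ_{i=1}^{m} C(d-i+1, k) ≥ φ_k(d+s, d), where φ_k(n,d) = C(d+1,k+1) + C(d,k+1) - C(d+1-s,k+1) for n = d+s. -/
/-- Grünbaum's bound `φ_k(n,d) = C(d+1,k+1) + C(d,k+1) - C(d+1-(n-d),k+1)`. -/
def phi (n d k : ℕ) : ℤ :=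
  ((d + 1).choose (k + 1) : ℤ) + (d.choose (k + 1) : ℤ)
    - ((d + 1 - (n - d)).choose (k + 1) : ℤ)

/-- Hockey stick: partial sum of a column of Pascal's triangle. -/
lemma hockey (d k : ℕ) : ∀ m, m ≤ d →
    (∑ i ∈ Finset.Icc 1 m, (d - i + 1).choose k) + (d + 1 - m).choose (k + 1)
      = (d + 1).choose (k + 1) := by
  intro m
  induction m with
  | zero => simp
  | succ n ih =>
    intro h
    rw [Finset.sum_Icc_succ_top (by omega : 1 ≤ n + 1)]
    have h1 : d - (n + 1) + 1 = d - n := by omega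
    have h2 : d + 1 - (n + 1) = d - n := by omega
    rw [h1, h2]
    have hih := ih (by omega)
    rw [show d + 1 - n = (d - n) + 1 by omega, Nat.choose_succ_succ (d - n) k] at hih
    simp only [Nat.succ_eq_add_one] at hih ⊢
    omega

/-- Convexity of `choose` in its first argument. -/
lemma convexChoose (x t K : ℕ) : ∀ j,
    (x + j).choose (K + 1) + (x + t).choose (K + 1)
      ≤ x.choose (K + 1) + (x + j + t).choose (K + 1) := by
  intro j
  induction j with
  | zero => simp
  | succ n ih =>
    rw [show x + (n + 1) + t = (x + n + t) + 1 by ring,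
        show x + (n + 1) = (x + n) + 1 by ring,
        Nat.choose_succ_succ, Nat.choose_succ_succ]
    have h3 : (x + n).choose K ≤ (x + n + t).choose K :=
      Nat.choose_le_choose K (by omega)
    simp only [Nat.succ_eq_add_one] at *
    omega

/-- The key inequality (⋆)–(⋆⋆) in the inductive proof of the generalized
Grünbaum lower bound theorem: for `d ≥ s ≥ 2`, `2 ≤ m ≤ s`, `k ≥ 1`,
`φ_k(d+s-m, d-1) + ∑_{i=1}^{m} C(d-i+1, k) ≥ φ_k(d+s, d)`. -/
theorem phi_induction_step (d s m k : ℕ) (hs2 : 2 ≤ s) (hsd : s ≤ d)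
    (hm2 : 2 ≤ m) (hms : m ≤ s) (hk : 1 ≤ k) :
    phi (d + s - m) (d - 1) k + ∑ i ∈ Finset.Icc 1 m, ((d - i + 1).choose k : ℤ)
      ≥ phi (d + s) d k := by
  obtain ⟨a, rfl⟩ := Nat.exists_eq_add_of_le hsd
  have hA : phi (s + a + s) (s + a) k =
      (((s + a + 1).choose (k + 1) : ℤ)) + ((s + a).choose (k + 1) : ℤ)
        - ((a + 1).choose (k + 1) : ℤ) := by
    unfold phi
    rw [show s + a + s - (s + a) = s by omega, show s + a + 1 - s = a + 1 by omega]
  have hB : phi (s + a + s - m) (s + a - 1) k =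
      (((s + a).choose (k + 1) : ℤ)) + ((s + a - 1).choose (k + 1) : ℤ)
        - ((a + (m - 1)).choose (k + 1) : ℤ) := by
    unfold phi
    rw [show s + a + s - m - (s + a - 1) = s - m + 1 by omega,
        show s + a - 1 + 1 - (s - m + 1) = a + (m - 1) by omega,
        show s + a - 1 + 1 = s + a by omega]
  have hSnat := hockey (s + a) k m (by omega)
  have hS : (∑ i ∈ Finset.Icc 1 m, ((s + a - i + 1).choose k : ℤ))
      + ((s + a + 1 - m).choose (k + 1) : ℤ) = ((s + a + 1).choose (k + 1) : ℤ) := by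
    exact_mod_cast hSnat
  have hC := convexChoose (a + 1) (s - m) k (m - 2)
  rw [show a + 1 + (m - 2) = a + (m - 1) by omega,
      show a + 1 + (s - m) = s + a + 1 - m by omega,
      show a + (m - 1) + (s - m) = s + a - 1 by omega] at hC
  have hC' : ((a + (m - 1)).choose (k + 1) : ℤ) + ((s + a + 1 - m).choose (k + 1) : ℤ)
      ≤ ((a + 1).choose (k + 1) : ℤ) + ((s + a - 1).choose (k + 1) : ℤ) := by
    exact_mod_cast hC
  rw [hA, hB]
  linarith [hS, hC']
end

section
/- Let d ≥ 2, 2 ≤ s ≤ d-1, and m ≥ 1. Then C(d,m+1) + C(d-1,m+1) - C(d-s,m+1) + Σ_{i=1}^{d-s+2} C(d+1-i, m) + C(d-2, m-1) ≥ C(d+1,m+1) + C(d,m+1) + C(d-1,m). -/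
open Finset

private lemma sum_range_choose' (m n : ℕ) :
    ∑ j ∈ Finset.range n, j.choose m = n.choose (m + 1) := by
  induction n with
  | zero => simp
  | succ n ih =>
      rw [Finset.sum_range_succ, ih, Nat.choose_succ_succ' (n) (m)]
      omega

private lemma choose_le_mul (a k : ℕ) (hk : 2 ≤ k) :
    a.choose k ≤ (a - 1) * a.choose (k - 1) := by
  obtain ⟨j, rfl⟩ : ∃ j, k = j + 1 := ⟨k - 1, by omega⟩
  have h := Nat.choose_succ_right_eq a j
  have hj : 1 ≤ j := by omega
  have h1 : a.choose (j + 1) ≤ a.choose (j + 1) * (j + 1) := Nat.le_mul_of_pos_right _ (by omega)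
  have h2 : a.choose j * (a - j) ≤ a.choose j * (a - 1) :=
    Nat.mul_le_mul_left _ (by omega)
  simp only [Nat.add_sub_cancel]
  calc a.choose (j + 1) ≤ a.choose (j + 1) * (j + 1) := h1
    _ = a.choose j * (a - j) := h
    _ ≤ a.choose j * (a - 1) := h2
    _ = (a - 1) * a.choose j := Nat.mul_comm _ _

private lemma key_ineq_wlog (a b k : ℕ) (ha : 1 ≤ a) (hab : a ≤ b) (hk : 2 ≤ k) :
    a.choose k + b.choose k ≤ (a + b - 1).choose k := by
  have hab1 : a + b - 1 = b + (a - 1) := by omega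
  rw [hab1]
  have hsum : ∑ j ∈ range (b + (a - 1)), j.choose (k - 1) = (b + (a - 1)).choose k := by
    rw [sum_range_choose']
    congr 1
    omega
  have hsplit : ∑ j ∈ range (b + (a - 1)), j.choose (k - 1)
      = ∑ j ∈ range b, j.choose (k - 1) + ∑ i ∈ range (a - 1), (b + i).choose (k - 1) :=
    Finset.sum_range_add _ _ _
  have hb : ∑ j ∈ range b, j.choose (k - 1) = b.choose k := by
    rw [sum_range_choose']
    congr 1
    omega
  have htail : (a - 1) * b.choose (k - 1) ≤ ∑ i ∈ range (a - 1), (b + i).choose (k - 1) := by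
    calc (a - 1) * b.choose (k - 1) = ∑ _i ∈ range (a - 1), b.choose (k - 1) := by
          rw [Finset.sum_const, Finset.card_range, smul_eq_mul]
      _ ≤ ∑ i ∈ range (a - 1), (b + i).choose (k - 1) := by
          apply Finset.sum_le_sum
          intro i _
          exact Nat.choose_le_choose _ (Nat.le_add_right _ _)
  have hstep1 : a.choose k ≤ (a - 1) * a.choose (k - 1) := choose_le_mul a k hk
  have hstep1' : (a - 1) * a.choose (k - 1) ≤ (a - 1) * b.choose (k - 1) :=
    Nat.mul_le_mul_left _ (Nat.choose_le_choose _ hab)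
  omega

private lemma key_ineq (a b k : ℕ) (ha : 1 ≤ a) (hb : 1 ≤ b) (hk : 2 ≤ k) :
    a.choose k + b.choose k ≤ (a + b - 1).choose k := by
  rcases le_total a b with h | h
  · exact key_ineq_wlog a b k ha h hk
  · have := key_ineq_wlog b a k hb h hk
    rw [Nat.add_comm b a] at this
    omega

/-- The combinatorial inequality of Case 4 of the lower bound theorem for
pseudomanifolds with at least `2d+1` vertices and at least `d+3` facets:
for `d ≥ 2`, `2 ≤ s ≤ d-1`, `m ≥ 1`,
`C(d,m+1) + C(d-1,m+1) - C(d-s,m+1) + ∑_{i=1}^{d-s+2} C(d+1-i,m) + C(d-2,m-1)`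
is at least `C(d+1,m+1) + C(d,m+1) + C(d-1,m)`. -/
theorem case4_inequality (d s m : ℕ) (hd : 2 ≤ d) (hs2 : 2 ≤ s) (hsd : s ≤ d - 1)
    (hm : 1 ≤ m) :
    (d.choose (m + 1) : ℤ) + ((d - 1).choose (m + 1) : ℤ) - ((d - s).choose (m + 1) : ℤ)
        + ∑ i ∈ Finset.Icc 1 (d - s + 2), ((d + 1 - i).choose m : ℤ)
        + ((d - 2).choose (m - 1) : ℤ)
      ≥ ((d + 1).choose (m + 1) : ℤ) + (d.choose (m + 1) : ℤ) + ((d - 1).choose m : ℤ) := by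
  have hd3 : 3 ≤ d := by omega
  -- Evaluate the sum
  have hS : ∑ i ∈ Finset.Icc 1 (d - s + 2), (d + 1 - i).choose m
      + (s - 1).choose (m + 1) = (d + 1).choose (m + 1) := by
    have h1 : ∑ i ∈ Finset.Icc 1 (d - s + 2), (d + 1 - i).choose m
        = ∑ i ∈ range (d - s + 2), (d - i).choose m := by
      rw [← Finset.Ico_add_one_right_eq_Icc, Finset.sum_Ico_eq_sum_range]
      apply Finset.sum_congr (by congr 1)
      intro i _
      congr 1
      omega
    have h2 : ∑ i ∈ range (d - s + 2), (d - i).choose m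
        = ∑ j ∈ range (d - s + 2), (s - 1 + j).choose m := by
      rw [← Finset.sum_range_reflect]
      apply Finset.sum_congr rfl
      intro j hj
      simp only [Finset.mem_range] at hj
      congr 1
      omega
    have h3 : ∑ j ∈ range (s - 1 + (d - s + 2)), j.choose m
        = ∑ j ∈ range (s - 1), j.choose m
          + ∑ j ∈ range (d - s + 2), (s - 1 + j).choose m :=
      Finset.sum_range_add _ _ _
    rw [sum_range_choose'] at h3
    rw [sum_range_choose'] at h3
    rw [h1, h2]
    have : s - 1 + (d - s + 2) = d + 1 := by omega
    rw [this] at h3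
    omega
  -- Pascal identities
  have hP1 : (d - 1).choose (m + 1) = (d - 2).choose (m + 1) + (d - 2).choose m := by
    have h1 : d - 1 = (d - 2) + 1 := by omega
    rw [h1, Nat.choose_succ_succ' (d - 2) m]
    omega
  have hP2 : (d - 1).choose m = (d - 2).choose m + (d - 2).choose (m - 1) := by
    obtain ⟨n, rfl⟩ : ∃ n, m = n + 1 := ⟨m - 1, by omega⟩
    have h1 : d - 1 = (d - 2) + 1 := by omega
    simp only [Nat.add_sub_cancel]
    rw [h1, Nat.choose_succ_succ' (d - 2) n]
    omega
  -- Key inequality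
  have hK : (d - s).choose (m + 1) + (s - 1).choose (m + 1) ≤ (d - 2).choose (m + 1) := by
    have h := key_ineq (d - s) (s - 1) (m + 1) (by omega) (by omega) (by omega)
    have : d - s + (s - 1) - 1 = d - 2 := by omega
    rwa [this] at h
  -- Conclude over ℤ
  have hScast : ∑ i ∈ Finset.Icc 1 (d - s + 2), ((d + 1 - i).choose m : ℤ)
      = ((∑ i ∈ Finset.Icc 1 (d - s + 2), (d + 1 - i).choose m : ℕ) : ℤ) := by
    push_cast
    rfl
  rw [hScast]
  have hS' := congrArg (Nat.cast : ℕ → ℤ) hS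
  push_cast at hS'
  have hP1' := congrArg (Nat.cast : ℕ → ℤ) hP1
  push_cast at hP1'
  have hP2' := congrArg (Nat.cast : ℕ → ℤ) hP2
  push_cast at hP2'
  have hK' : ((d - s).choose (m + 1) : ℤ) + ((s - 1).choose (m + 1) : ℤ)
      ≤ ((d - 2).choose (m + 1) : ℤ) := by exact_mod_cast hK
  linarith
end
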